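/- Let φ be the substitution φ(i) = 0^t(i+1) for i < m-1, φ(m-1) = 0^s with t ≥ s ≥ 2, and u_β its fixed point. Then the palindrome 0^t has exactly two palindromic extensions in u_β, namely 0·0^t·0 and 1·0^t·1. -/

import Mathlib

/-- The canonical substitution associated with a simple Parry number `β` with
`d_β(1) = t t ⋯ t s` (`m` digits): `φ(i) = 0^t (i+1)` for `i ≤ m-2` and
`φ(m-1) = 0^s`.  Letters are encoded as natural numbers `0, …, m-1`. -/
def phi (m t s : ℕ) : ℕ → List ℕ := fun a =>
  if a = m - 1 then List.replicate s 0 else List.replicate t 0 ++ [a + 1]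

/-- Application of a morphism to a finite word. -/
def applyMorph (f : ℕ → List ℕ) (l : List ℕ) : List ℕ := l.flatMap f

/-- `w` is a factor of the fixed point `u_β = lim φⁿ(0)` of the substitution,
i.e. `w` is a factor of some `φⁿ(0)`. -/
def inLang (f : ℕ → List ℕ) (w : List ℕ) : Prop :=
  ∃ k : ℕ, w <:+: (applyMorph f)^[k] [0]

/-!
The nonzero letters of `φ(w)` are exactly the last letters of the blocks `φ(c) = 0^t (c+1)`,
and every block is nonempty. So a factor `a 0^g b` of `φ(w)` with `a, b ≠ 0` and `g ≤ t`
forces `g = t` and comes from the factor `(a-1)(b-1)` of `w`. For `a ≥ 2`, a factor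
`a 0^t a` of `u_β` would thus yield the factor `(a-1)(a-1)`, i.e. a gap `0 = t`.
Conversely, `1 0^t 1` occurs in `φ(00)`, and applying `φ` repeatedly to the factor `10` of
`φ(00)` reaches `(m-1)0`, whose image `0^(s+t) 1` contains `0^(t+2)` since `s ≥ 2`.
-/

open List

section Morphism

variable (f : ℕ → List ℕ)

@[simp]
lemma applyMorph_nil : applyMorph f [] = [] := rfl

@[simp]
lemma applyMorph_cons (a : ℕ) (w : List ℕ) :
    applyMorph f (a :: w) = f a ++ applyMorph f w := rfl

@[simp]
lemma applyMorph_append (v w : List ℕ) :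
    applyMorph f (v ++ w) = applyMorph f v ++ applyMorph f w :=
  flatMap_append

lemma List.IsInfix.applyMorph {v w : List ℕ} (h : v <:+: w) :
    _root_.applyMorph f v <:+: _root_.applyMorph f w := by
  obtain ⟨x, y, rfl⟩ := h
  exact ⟨_root_.applyMorph f x, _root_.applyMorph f y, by simp⟩

variable {f}

lemma inLang.of_infix {v w : List ℕ} (hw : inLang f w) (hv : v <:+: w) : inLang f v :=
  hw.imp fun _ hk => hv.trans hk

lemma inLang.applyMorph {w : List ℕ} (hw : inLang f w) : inLang f (applyMorph f w) :=
  let ⟨k, hk⟩ := hw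
  ⟨k + 1, by rw [Function.iterate_succ_apply']; exact hk.applyMorph f⟩

lemma inLang_applyMorph_zero : inLang f (f 0) :=
  ⟨1, by simp [applyMorph]⟩

end Morphism

lemma replicate_append_singleton_eq_append_cons {z e a n : ℕ} {x y : List ℕ}
    (h : replicate n z ++ [e] = x ++ a :: y) (ha : a ≠ z) :
    x = replicate n z ∧ a = e ∧ y = [] := by
  induction n generalizing x with
  | zero =>
    cases x <;> simp_all
  | succ n ih =>
    cases x with
    | nil =>
      simp only [replicate_succ, nil_append, cons_append, cons.injEq] at h
      exact absurd h.1.symm ha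
    | cons b x =>
      simp only [replicate_succ, cons_append, cons.injEq] at h
      obtain ⟨rfl, h⟩ := h
      obtain ⟨rfl, rfl, rfl⟩ := ih h
      simp [replicate_succ]

section Phi

variable {m t s : ℕ}

lemma phi_of_ne {c : ℕ} (hc : c ≠ m - 1) : phi m t s c = replicate t 0 ++ [c + 1] := by
  simp [phi, hc]

lemma phi_last : phi m t s (m - 1) = replicate s 0 := by
  simp [phi]

lemma phi_zero (hm : 2 ≤ m) : phi m t s 0 = replicate t 0 ++ [1] :=
  phi_of_ne (by omega)

lemma phi_ne_nil (hs : s ≠ 0) (c : ℕ) : phi m t s c ≠ [] := by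
  unfold phi; split_ifs <;> simp [hs]

lemma phi_eq_append_cons {c a : ℕ} {x y : List ℕ} (h : phi m t s c = x ++ a :: y)
    (ha : a ≠ 0) : x = replicate t 0 ∧ a = c + 1 ∧ y = [] := by
  unfold phi at h
  split_ifs at h
  · exact absurd (eq_of_mem_replicate (h ▸ mem_append_right x mem_cons_self)) ha
  · exact replicate_append_singleton_eq_append_cons h ha

lemma applyMorph_phi_eq_append_cons {a : ℕ} {x y w : List ℕ}
    (h : applyMorph (phi m t s) w = x ++ a :: y) (ha : a ≠ 0) :
    ∃ w₁ w₂, w = w₁ ++ (a - 1) :: w₂ ∧ x = applyMorph (phi m t s) w₁ ++ replicate t 0 ∧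
      y = applyMorph (phi m t s) w₂ := by
  induction w generalizing x with
  | nil => simp at h
  | cons c w ih =>
    rw [applyMorph_cons, append_eq_append_iff] at h
    have of_tail : ∀ x', x = phi m t s c ++ x' → applyMorph (phi m t s) w = x' ++ a :: y →
        ∃ w₁ w₂, c :: w = w₁ ++ (a - 1) :: w₂ ∧
          x = applyMorph (phi m t s) w₁ ++ replicate t 0 ∧ y = applyMorph (phi m t s) w₂ := by
      rintro x' rfl hw
      obtain ⟨w₁, w₂, rfl, rfl, rfl⟩ := ih hw
      exact ⟨c :: w₁, w₂, rfl, by simp, rfl⟩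
    rcases h with ⟨x', hx, hw⟩ | ⟨_ | ⟨b, x'⟩, hc, hw⟩
    · exact of_tail x' hx hw
    · exact of_tail [] (by simpa using hc.symm) (by simpa using hw.symm)
    · obtain ⟨rfl, rfl⟩ := cons.inj hw
      obtain ⟨rfl, rfl, rfl⟩ := phi_eq_append_cons hc ha
      exact ⟨[], w, by simp, by simp, rfl⟩

lemma infix_of_infix_applyMorph_phi (hs : s ≠ 0) {a b g : ℕ} {w : List ℕ} (ha : a ≠ 0)
    (hb : b ≠ 0) (hg : g ≤ t) (h : [a] ++ replicate g 0 ++ [b] <:+: applyMorph (phi m t s) w) :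
    g = t ∧ [a - 1, b - 1] <:+: w := by
  obtain ⟨x, v, h⟩ := h
  obtain ⟨w₁, w₂, rfl, -, h₂⟩ :=
    applyMorph_phi_eq_append_cons (a := a) (x := x) (y := replicate g 0 ++ b :: v)
      (by rw [← h]; simp) ha
  obtain ⟨w₃, w₄, rfl, h₃, -⟩ := applyMorph_phi_eq_append_cons h₂.symm hb
  have hlen := congrArg length h₃
  simp only [length_replicate, length_append] at hlen
  obtain rfl : w₃ = [] := by
    have : applyMorph (phi m t s) w₃ = [] := length_eq_zero_iff.mp (by omega)
    cases w₃ with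
    | nil => rfl
    | cons c _ => exact absurd (append_eq_nil_iff.mp this).1 (phi_ne_nil hs c)
  exact ⟨by simpa using hlen, w₁, w₄, by simp⟩

lemma inLang_phi_pred (hs : s ≠ 0) {a b g : ℕ} (ha : a ≠ 0) (hb : b ≠ 0) (hg : g ≤ t)
    (h : inLang (phi m t s) ([a] ++ replicate g 0 ++ [b])) :
    g = t ∧ inLang (phi m t s) [a - 1, b - 1] := by
  obtain ⟨_ | k, hk⟩ := h
  · simpa using hk.length_le
  · rw [Function.iterate_succ_apply'] at hk
    obtain ⟨rfl, hk⟩ := infix_of_infix_applyMorph_phi hs ha hb hg hk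
    exact ⟨rfl, k, hk⟩

lemma inLang_phi_zero_zero (hm : 2 ≤ m) (ht : 2 ≤ t) : inLang (phi m t s) [0, 0] := by
  obtain ⟨t, rfl⟩ := Nat.exists_eq_add_of_le' ht
  refine inLang_applyMorph_zero.of_infix ⟨[], replicate t 0 ++ [1], ?_⟩
  simp [phi_zero hm, replicate_succ]

lemma inLang_phi_replicate_one_replicate_one (hm : 2 ≤ m) (ht : 2 ≤ t) :
    inLang (phi m t s) (replicate t 0 ++ [1] ++ replicate t 0 ++ [1]) := by
  simpa [phi_zero hm] using (inLang_phi_zero_zero hm ht).applyMorph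

lemma inLang_phi_succ_zero (hm : 2 ≤ m) (ht : 2 ≤ t) {j : ℕ} (hj : j < m - 1) :
    inLang (phi m t s) [j + 1, 0] := by
  obtain ⟨t, rfl⟩ := Nat.exists_eq_add_of_le' (show 1 ≤ t by omega)
  induction j with
  | zero =>
    exact (inLang_phi_replicate_one_replicate_one hm ht).of_infix
      ⟨replicate (t + 1) 0, replicate t 0 ++ [1], by simp [replicate_succ]⟩
  | succ j ih =>
    refine (ih (by omega)).applyMorph.of_infix ⟨replicate (t + 1) 0, replicate t 0 ++ [1], ?_⟩
    simp [phi_zero hm, phi_of_ne (show j + 1 ≠ m - 1 by omega), replicate_succ]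

lemma inLang_phi_replicate_zero (hm : 2 ≤ m) (ht : 2 ≤ t) :
    inLang (phi m t s) (replicate (s + t) 0) := by
  have h := (inLang_phi_succ_zero (s := s) (j := m - 2) hm ht (by omega)).applyMorph
  rw [show m - 2 + 1 = m - 1 by omega] at h
  refine h.of_infix ⟨[], [1], ?_⟩
  simp [phi_zero hm, phi_last, ← append_assoc, replicate_append_replicate]

end Phi

/-- For `t ≥ s ≥ 2`, the palindrome `0^t` has exactly two palindromic
extensions in `u_β`, namely `0·0^t·0` and `1·0^t·1`. -/
theorem stmt10 (m t s : ℕ) (hm : 2 ≤ m) (hs : 2 ≤ s) (hts : s ≤ t) :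
    inLang (phi m t s) ([0] ++ List.replicate t 0 ++ [0]) ∧
    inLang (phi m t s) ([1] ++ List.replicate t 0 ++ [1]) ∧
    ∀ a : ℕ, a < m →
      inLang (phi m t s) ([a] ++ List.replicate t 0 ++ [a]) → a = 0 ∨ a = 1 := by
  have ht : 2 ≤ t := hs.trans hts
  refine ⟨?_, ?_, ?_⟩
  · refine (inLang_phi_replicate_zero hm ht).of_infix ⟨[], replicate (s - 2) 0, ?_⟩
    rw [show s + t = 1 + t + 1 + (s - 2) by omega]
    simp [replicate_add]
  · exact (inLang_phi_replicate_one_replicate_one hm ht).of_infix ⟨replicate t 0, [], by simp⟩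
  · intro a _ h
    by_contra ha
    obtain ⟨-, hpair⟩ := inLang_phi_pred (s := s) (by omega) (by omega) (by omega) le_rfl h
    obtain ⟨hgap, -⟩ := inLang_phi_pred (s := s) (a := a - 1) (b := a - 1) (g := 0) (by omega)
      (by omega) (by omega) (by omega) (by simpa using hpair)
    omega
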